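/- Let λ and r⁻¹ be positive integers with λr ∈ ℕ. For k = (k₁,k₂) ∈ {0,…,r⁻¹−1}², let g_k = (2π/λ)(k₁,k₂) and let T_k ⊂ T³ be the periodic array of vertical tubes T_k = {x ∈ T³ : dist_{T²}((x₁,x₂), g_k + (2π/(λr))ℤ²) ≤ 2π/(4λ)}. There exists a universal constant C_* ≥ 1 with the following property: if P ⊂ T³ is a union of at most N sets, each of which is contained in the closed (2π/λ)-neighborhood of a curve in T³ of length at most 4π/(λr), and if C_* N r ≤ 1, then there exists a shift k₀ ∈ {0,…,r⁻¹−1}² such that T_{k₀} ∩ P = ∅. -/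

import Mathlib

/-!
Project onto the horizontal 2-torus and write `δ = 2π/λ`. Cutting a curve of length at most
`2r⁻¹δ` at the level sets of `⌊arclength/δ⌋` splits it into at most `2r⁻¹ + 1` arcs of diameter
at most `δ`. If `T_k` passes within `δ` of such an arc, then in each horizontal coordinate some
axis of `T_k` lies within `9δ/4` of a fixed point of the arc; there are at most five grid points
`δℤ` there, and since `r⁻¹ ∣ λ` each of them determines the corresponding coordinate of `k`
(its residue modulo `r⁻¹`). So one curve rules out at most `25(2r⁻¹ + 1)` of the `r⁻²` shifts,
and `N` curves with `100 N ≤ r⁻¹` cannot rule out all of them.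
-/
noncomputable section

/-- The circle `ℝ/2πℤ`. -/
abbrev Torus : Type := AddCircle (2 * Real.pi)

/-- The 3-dimensional torus `𝕋³`. -/
abbrev Torus3 : Type := Fin 3 → Torus

/-- The periodic array of vertical tubes of radius `2π/(4λ)` with shift `k`:
`T_k = {x | dist_{𝕋²}((x₁,x₂), g_k + (2π/(λr))ℤ²) ≤ 2π/(4λ)}`, with `g_k = (2π/λ)k` and
`r = rinv⁻¹`. -/
def tube (lam rinv : ℕ) (k : Fin 2 → ℕ) : Set Torus3 :=
  {x | ∃ m : Fin 2 → ℤ,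
    (dist (x 0) (((2 * Real.pi / lam * (k 0 : ℝ) + 2 * Real.pi * rinv / lam * (m 0 : ℝ)) : ℝ)
        : Torus))^2 +
    (dist (x 1) (((2 * Real.pi / lam * (k 1 : ℝ) + 2 * Real.pi * rinv / lam * (m 1 : ℝ)) : ℝ)
        : Torus))^2
      ≤ (2 * Real.pi / (4 * lam))^2}

open Set

section Variation

variable {α E : Type*} [LinearOrder α] [PseudoMetricSpace E] {f : α → E} {s : Set α}

theorem eVariationOn.dist_le_toReal_sub (hf : eVariationOn f s ≠ ⊤) {t t' : α} (ht : t ∈ s)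
    (ht' : t' ∈ s) (htt' : t ≤ t') :
    dist (f t) (f t') ≤
      (eVariationOn f (s ∩ Iic t')).toReal - (eVariationOn f (s ∩ Iic t)).toReal := by
  have hsplit : eVariationOn f (s ∩ Iic t) + eVariationOn f (s ∩ Icc t t') ≤
      eVariationOn f (s ∩ Iic t') :=
    (eVariationOn.add_le_union f fun _ hx _ hy => hx.2.trans hy.2.1).trans <|
      eVariationOn.mono f <| union_subset (inter_subset_inter_right _ (Iic_subset_Iic.2 htt'))
        (inter_subset_inter_right _ Icc_subset_Iic_self)
  have hfin : ∀ u ⊆ s, eVariationOn f u ≠ ⊤ := fun u hu =>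
    ne_top_of_le_ne_top hf (eVariationOn.mono f hu)
  have hdist : dist (f t) (f t') ≤ (eVariationOn f (s ∩ Icc t t')).toReal :=
    BoundedVariationOn.dist_le (hfin _ inter_subset_left) ⟨ht, le_rfl, htt'⟩ ⟨ht', htt', le_rfl⟩
  have hreal := ENNReal.toReal_mono (hfin _ inter_subset_left) hsplit
  rw [ENNReal.toReal_add (hfin _ inter_subset_left) (hfin _ inter_subset_left)] at hreal
  linarith

theorem eVariationOn.exists_label_dist_le {n : ℕ} {ε : ℝ} (hε : 0 < ε)
    (hf : eVariationOn f s ≤ ENNReal.ofReal (n * ε)) :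
    ∃ c : α → ℕ, (∀ t ∈ s, c t ≤ n) ∧
      ∀ t ∈ s, ∀ t' ∈ s, c t = c t' → dist (f t) (f t') ≤ ε := by
  set φ : α → ℝ := fun t => (eVariationOn f (s ∩ Iic t)).toReal
  have hφ : ∀ t, φ t ≤ n * ε := fun t =>
    ENNReal.toReal_le_of_le_ofReal (by positivity)
      ((eVariationOn.mono f inter_subset_left).trans hf)
  refine ⟨fun t => ⌊φ t / ε⌋₊, fun t _ => Nat.floor_le_of_le ((div_le_iff₀ hε).2 (hφ t)), ?_⟩
  intro t ht t' ht' (hc : ⌊φ t / ε⌋₊ = ⌊φ t' / ε⌋₊)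
  wlog htt' : t ≤ t' generalizing t t'
  · rw [dist_comm]; exact this t' ht' t ht hc.symm (le_of_not_ge htt')
  have hfin : eVariationOn f s ≠ ⊤ := ne_top_of_le_ne_top ENNReal.ofReal_ne_top hf
  have hdist := eVariationOn.dist_le_toReal_sub hfin ht ht' htt'
  have hlt : φ t' / ε < φ t / ε + 1 :=
    calc φ t' / ε < ⌊φ t' / ε⌋₊ + 1 := Nat.lt_floor_add_one _
      _ = ⌊φ t / ε⌋₊ + 1 := by rw [hc]
      _ ≤ φ t / ε + 1 := by gcongr; exact Nat.floor_le (by positivity)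
  rw [div_lt_iff₀ hε, add_mul, div_mul_cancel₀ _ hε.ne', one_mul] at hlt
  linarith

end Variation

theorem Int.card_Icc_ceil_floor_le {R : Type*} [Field R] [LinearOrder R] [IsStrictOrderedRing R]
    [FloorRing R] {a b : R} (hab : a ≤ b) :
    ((Finset.Icc ⌈a⌉ ⌊b⌋).card : R) ≤ b - a + 1 := by
  have hcard := Int.card_Icc_of_le ⌈a⌉ ⌊b⌋
    ((Int.ceil_le_floor_add_one a).trans (by gcongr))
  have hcard' : ((Finset.Icc ⌈a⌉ ⌊b⌋).card : R) = ⌊b⌋ + 1 - ⌈a⌉ := by exact_mod_cast hcard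
  linarith [Int.floor_le b, Int.le_ceil a]

/-- With `p = 2π`, the axes of the tube family `T_k` sit at `tubeAxis p λ r⁻¹ (k 0) m₀` and
`tubeAxis p λ r⁻¹ (k 1) m₁` in the two horizontal coordinates. -/
def tubeAxis (p : ℝ) (lam rinv k : ℕ) (m : ℤ) : AddCircle p :=
  ((p / lam * k + p * rinv / lam * m : ℝ) : AddCircle p)

theorem card_le_of_forall_dist_tubeAxis_le {p : ℝ} (hp : 0 < p) {lam rinv : ℕ} (hlam : 0 < lam)
    (hdvd : rinv ∣ lam) {a : AddCircle p} {ρ : ℝ} (hρ : 0 ≤ ρ) {A : Finset ℕ}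
    (hA : ∀ k ∈ A, k < rinv ∧ ∃ m : ℤ, dist (tubeAxis p lam rinv k m) a ≤ ρ) :
    (A.card : ℝ) ≤ 2 * ρ * lam / p + 1 := by
  obtain ⟨c, rfl⟩ := QuotientAddGroup.mk_surjective a
  obtain ⟨d, hd⟩ := hdvd
  set δ : ℝ := p / lam
  have hδ : 0 < δ := by positivity
  have hδlam : δ * lam = p := div_mul_cancel₀ _ (by positivity)
  have hsub : A ⊆ (Finset.Icc ⌈(c - ρ) / δ⌉ ⌊(c + ρ) / δ⌋).image fun n : ℤ => (n % rinv).toNat := by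
    intro k hk
    obtain ⟨hk, m, hm⟩ := hA k hk
    set u : ℝ := p / lam * k + p * rinv / lam * m
    set w : ℤ := round (p⁻¹ * (u - c))
    rw [tubeAxis, dist_eq_norm, ← AddCircle.coe_sub, AddCircle.norm_eq, abs_le] at hm
    -- Shifting the axis index by a multiple of `λ` moves it next to `c` without changing its
    -- residue modulo `r⁻¹`, because `r⁻¹ ∣ λ`.
    have hn : δ * ((k + rinv * (m - d * w) : ℤ) : ℝ) = u - c - w * p + c := by
      have : (lam : ℝ) = rinv * d := by exact_mod_cast hd
      push_cast
      linear_combination (-(w : ℝ)) * hδlam + δ * w * this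
    refine Finset.mem_image.2 ⟨k + rinv * (m - d * w), ?_, ?_⟩
    · rw [← Int.cast_mem_Icc_iff, mem_Icc, div_le_iff₀ hδ, le_div_iff₀ hδ, mul_comm _ δ, hn]
      constructor <;> linarith
    · rw [Int.add_mul_emod_self_left, Int.emod_eq_of_lt (by positivity) (by omega)]
      simp
  calc (A.card : ℝ) ≤ (Finset.Icc ⌈(c - ρ) / δ⌉ ⌊(c + ρ) / δ⌋).card := by
        exact_mod_cast (Finset.card_le_card hsub).trans Finset.card_image_le
    _ ≤ (c + ρ) / δ - (c - ρ) / δ + 1 := Int.card_Icc_ceil_floor_le (by gcongr; linarith)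
    _ = 2 * ρ * lam / p + 1 := by simp only [δ]; field_simp; ring

theorem Finset.card_le_pow_card_of_card_image_le {ι β : Type*} [Fintype ι] [DecidableEq β]
    {B : Finset (ι → β)} {C : ℕ} (h : ∀ i, (B.image fun k => k i).card ≤ C) :
    B.card ≤ C ^ Fintype.card ι := by
  classical
  calc B.card ≤ (Fintype.piFinset fun i => B.image fun k => k i).card :=
        Finset.card_le_card fun k hk =>
          Fintype.mem_piFinset.2 fun i => Finset.mem_image_of_mem _ hk
    _ = ∏ i, (B.image fun k => k i).card := Fintype.card_piFinset _
    _ ≤ C ^ Fintype.card ι := Finset.prod_le_pow_card _ _ _ fun i _ => h i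

theorem exists_dist_tubeAxis_le_of_mem_tube {lam rinv : ℕ} {k : Fin 2 → ℕ} {x y : Torus3} {ρ : ℝ}
    (hx : x ∈ tube lam rinv k) (hxy : dist x y ≤ ρ) (j : Fin 2) :
    ∃ m : ℤ, dist (tubeAxis (2 * Real.pi) lam rinv (k j) m) (y j.castSucc) ≤
      2 * Real.pi / (4 * lam) + ρ := by
  obtain ⟨m, hm⟩ := hx
  change dist (x 0) (tubeAxis (2 * Real.pi) lam rinv (k 0) (m 0)) ^ 2 +
    dist (x 1) (tubeAxis (2 * Real.pi) lam rinv (k 1) (m 1)) ^ 2 ≤ _ at hm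
  have hcoord : ∀ j : Fin 2, dist (x j.castSucc) (tubeAxis (2 * Real.pi) lam rinv (k j) (m j)) ^ 2
      ≤ (2 * Real.pi / (4 * lam)) ^ 2 := by
    rw [Fin.forall_fin_two]
    exact ⟨le_of_add_le_of_nonneg_left hm (sq_nonneg _),
      le_of_add_le_of_nonneg_right hm (sq_nonneg _)⟩
  refine ⟨m j, ?_⟩
  calc _ ≤ dist (tubeAxis (2 * Real.pi) lam rinv (k j) (m j)) (x j.castSucc) +
        dist (x j.castSucc) (y j.castSucc) := dist_triangle _ _ _
    _ ≤ 2 * Real.pi / (4 * lam) + ρ := by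
        gcongr
        · rw [dist_comm]
          exact (pow_le_pow_iff_left₀ dist_nonneg (by positivity) two_ne_zero).1 (hcoord j)
        · exact (dist_le_pi_dist x y _).trans hxy

theorem card_shifts_near_point_le {lam rinv : ℕ} (hlam : 0 < lam) (hdvd : rinv ∣ lam) {y : Torus3}
    {B : Finset (Fin 2 → ℕ)}
    (hB : ∀ k ∈ B, (∀ j, k j < rinv) ∧ ∃ x ∈ tube lam rinv k, dist x y ≤ 2 * (2 * Real.pi / lam)) :
    B.card ≤ 25 := by
  refine (Finset.card_le_pow_card_of_card_image_le (C := 5) fun j => ?_).trans (by simp)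
  have hcard := card_le_of_forall_dist_tubeAxis_le Real.two_pi_pos hlam hdvd
    (a := y j.castSucc) (ρ := 2 * Real.pi / (4 * lam) + 2 * (2 * Real.pi / lam)) (by positivity)
    (A := B.image fun k => k j) fun k' hk' => by
      obtain ⟨k, hk, rfl⟩ := Finset.mem_image.1 hk'
      obtain ⟨hlt, x, hx, hxy⟩ := hB k hk
      exact ⟨hlt j, exists_dist_tubeAxis_le_of_mem_tube hx hxy j⟩
  have h11 : 2 * (2 * Real.pi / (4 * lam) + 2 * (2 * Real.pi / lam)) * lam / (2 * Real.pi) + 1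
      = 11 / 2 := by
    field_simp; ring
  have : ((B.image fun k => k j).card : ℝ) < 6 := by linarith
  exact Nat.le_of_lt_succ (by exact_mod_cast this)

theorem card_shifts_near_curve_le {lam rinv : ℕ} (hlam : 0 < lam) (hdvd : rinv ∣ lam)
    {γ : ℝ → Torus3}
    (hγ : eVariationOn γ (Icc 0 1) ≤ ENNReal.ofReal (4 * Real.pi * rinv / lam))
    {B : Finset (Fin 2 → ℕ)}
    (hB : ∀ k ∈ B, (∀ j, k j < rinv) ∧
      ∃ x ∈ tube lam rinv k, ∃ t ∈ Icc (0 : ℝ) 1, dist x (γ t) ≤ 2 * Real.pi / lam) :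
    B.card ≤ (2 * rinv + 1) * 25 := by
  classical
  set δ := 2 * Real.pi / lam
  obtain ⟨c, hc_le, hc_dist⟩ := eVariationOn.exists_label_dist_le (n := 2 * rinv) (ε := δ)
    (by positivity) (by convert hγ using 2; simp only [δ]; push_cast; ring)
  set piece : ℕ → Finset (Fin 2 → ℕ) := fun i => B.filter fun k =>
    ∃ x ∈ tube lam rinv k, ∃ t ∈ Icc (0 : ℝ) 1, c t = i ∧ dist x (γ t) ≤ δ
  have hcover : B ⊆ (Finset.range (2 * rinv + 1)).biUnion piece := by
    intro k hk
    obtain ⟨-, x, hx, t, ht, hxt⟩ := hB k hk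
    exact Finset.mem_biUnion.2 ⟨c t, Finset.mem_range.2 (Nat.lt_succ_of_le (hc_le t ht)),
      Finset.mem_filter.2 ⟨hk, x, hx, t, ht, rfl, hxt⟩⟩
  have hpiece : ∀ i ∈ Finset.range (2 * rinv + 1), (piece i).card ≤ 25 := by
    intro i _
    by_cases hi : ∃ t₀ ∈ Icc (0 : ℝ) 1, c t₀ = i
    · obtain ⟨t₀, ht₀, rfl⟩ := hi
      refine card_shifts_near_point_le hlam hdvd (y := γ t₀) fun k hk => ?_
      obtain ⟨hkB, x, hx, t, ht, hct, hxt⟩ := Finset.mem_filter.1 hk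
      refine ⟨(hB k hkB).1, x, hx, ?_⟩
      calc dist x (γ t₀) ≤ dist x (γ t) + dist (γ t) (γ t₀) := dist_triangle _ _ _
        _ ≤ 2 * δ := by linarith [hc_dist t ht t₀ ht₀ hct]
    · have hempty : piece i = ∅ := Finset.filter_eq_empty_iff.2
        fun _ _ ⟨_, _, t, ht, hct, _⟩ => hi ⟨t, ht, hct⟩
      simp [hempty]
  calc B.card ≤ ((Finset.range (2 * rinv + 1)).biUnion piece).card := Finset.card_le_card hcover
    _ ≤ (2 * rinv + 1) * 25 := by
        simpa using Finset.card_biUnion_le_card_mul _ _ _ hpiece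

/-- **Placing straight pipes which avoid bent pipes.** There is a universal constant `C_*`
such that if `P ⊆ 𝕋³` is covered by at most `N` sets, each contained in the closed
`2π/λ`-neighborhood of a curve of length at most `4π/(λr)`, and `C_* N r ≤ 1`, then some
shifted periodic family of straight tubes `T_{k₀}` is disjoint from `P`. -/
theorem pipe_dodging :
    ∃ Cstar : ℝ, 1 ≤ Cstar ∧
      ∀ (lam rinv : ℕ), 0 < lam → 0 < rinv → rinv ∣ lam →
      ∀ (N : ℕ) (P : Set Torus3) (S : Fin N → Set Torus3) (γ : Fin N → ℝ → Torus3),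
        P ⊆ ⋃ i, S i →
        (∀ i, ContinuousOn (γ i) (Set.Icc 0 1) ∧
          eVariationOn (γ i) (Set.Icc 0 1) ≤ ENNReal.ofReal (4 * Real.pi * rinv / lam) ∧
          S i ⊆ {x | ∃ t ∈ Set.Icc (0:ℝ) 1, dist x (γ i t) ≤ 2 * Real.pi / lam}) →
        Cstar * N * (rinv : ℝ)⁻¹ ≤ 1 →
        ∃ k₀ : Fin 2 → ℕ, (∀ i, k₀ i < rinv) ∧ tube lam rinv k₀ ∩ P = ∅ := by
  refine ⟨100, by norm_num, fun lam rinv hlam hrinv hdvd N P S γ hPS hγ hC => ?_⟩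
  have hN : 100 * N ≤ rinv := by
    have := (mul_inv_le_iff₀ (by exact_mod_cast hrinv : (0 : ℝ) < rinv)).1 hC
    exact_mod_cast (by linarith : (100 : ℝ) * N ≤ rinv)
  classical
  set shifts := Fintype.piFinset fun _ : Fin 2 => Finset.range rinv
  set bad : Fin N → Finset (Fin 2 → ℕ) := fun i => shifts.filter fun k =>
    ∃ x ∈ tube lam rinv k, ∃ t ∈ Icc (0 : ℝ) 1, dist x (γ i t) ≤ 2 * Real.pi / lam
  have hbad : ∀ i ∈ Finset.univ, (bad i).card ≤ (2 * rinv + 1) * 25 := fun i _ =>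
    card_shifts_near_curve_le hlam hdvd (hγ i).2.1 fun k hk => by
      obtain ⟨hk, hnear⟩ := Finset.mem_filter.1 hk
      exact ⟨fun j => Finset.mem_range.1 (Fintype.mem_piFinset.1 hk j), hnear⟩
  have hcount : (Finset.univ.biUnion bad).card < shifts.card := by
    calc _ ≤ N * ((2 * rinv + 1) * 25) := by
          simpa using Finset.card_biUnion_le_card_mul _ _ _ hbad
      _ < rinv * rinv := by
          rcases N.eq_zero_or_pos with rfl | hN0
          · simpa using hrinv.ne'
          · nlinarith
      _ = shifts.card := by simp [shifts, sq]
  obtain ⟨k₀, hk₀, hk₀_good⟩ := Finset.exists_mem_notMem_of_card_lt_card hcount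
  refine ⟨k₀, fun j => Finset.mem_range.1 (Fintype.mem_piFinset.1 hk₀ j),
    Set.eq_empty_iff_forall_notMem.2 ?_⟩
  rintro x ⟨hxT, hxP⟩
  obtain ⟨i, hi⟩ := Set.mem_iUnion.1 (hPS hxP)
  exact hk₀_good (Finset.mem_biUnion.2
    ⟨i, Finset.mem_univ _, Finset.mem_filter.2 ⟨hk₀, x, hxT, (hγ i).2.2 hi⟩⟩)
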